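/- Let Φ be a CCTLc formula, S a Kripke structure, q a state of S, and π a history such that π·q is a finite run prefix of S. Let (v,ε) be a valuation and environment compatible with (SF#(Φ), π). Then (π,q) ⊨_S Φ if and only if (q,v,ε) ⊨_S Φ̄, where Φ̄ is the CCTLv translation of Φ. -/

import Mathlib

open scoped Classical

noncomputable section

/-- A Kripke structure over atomic propositions indexed by `ℕ`. -/
structure Kripke (Q : Type) where
  R : Q → Q → Prop
  total : ∀ q, ∃ q', R q q'
  label : Q → ℕ → Prop

/-- An (infinite) run of a Kripke structure. -/
def Kripke.Run {Q : Type} (S : Kripke Q) (ρ : ℕ → Q) : Prop :=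
  ∀ i, S.R (ρ i) (ρ (i + 1))

/-- The strict prefix `ρ(0) ⋯ ρ(n-1)` of a run (`n` states). -/
def runPrefix {Q : Type} (ρ : ℕ → Q) (n : ℕ) : List Q :=
  (List.range n).map ρ

/-- Comparison operators `<, ≤, =, ≥, >`. -/
inductive Cmp where
  | lt | le | eq | ge | gt

def Cmp.eval : Cmp → ℕ → ℕ → Prop
  | .lt, a, b => a < b
  | .le, a, b => a ≤ b
  | .eq, a, b => a = b
  | .ge, a, b => a ≥ b
  | .gt, a, b => a > b

/-- CCTLc formulas: `P | φ∧ψ | ¬φ | N φ | E φ U_C ψ | A φ U_C ψ`, where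
`C = Σᵢ αᵢ·#φᵢ ∼ c` is a single atomic counting constraint given by a
coefficient/formula list, a comparison and a constant. -/
inductive CcForm : Type where
  | atom : ℕ → CcForm
  | and : CcForm → CcForm → CcForm
  | not : CcForm → CcForm
  | now : CcForm → CcForm
  | eu : CcForm → List (ℕ × CcForm) → Cmp → ℕ → CcForm → CcForm
  | au : CcForm → List (ℕ × CcForm) → Cmp → ℕ → CcForm → CcForm

mutual
/-- Cumulative satisfaction `(π,q) ⊨ φ` of a CCTLc formula: `π` is the
history, `q` the current state. -/
def ccsat {Q : Type} (S : Kripke Q) : CcForm → List Q → Q → Prop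
  | .atom p, _, q => S.label q p
  | .and φ ψ, π, q => ccsat S φ π q ∧ ccsat S ψ π q
  | .not φ, π, q => ¬ ccsat S φ π q
  | .now φ, _, q => ccsat S φ [] q
  | .eu φ l c k ψ, π, q => ∃ ρ, S.Run ρ ∧ ρ 0 = q ∧
      ∃ i, ccsat S ψ (π ++ runPrefix ρ i) (ρ i) ∧
        c.eval (clsum S l (π ++ runPrefix ρ i)) k ∧
        ∀ j < i, ccsat S φ (π ++ runPrefix ρ j) (ρ j)
  | .au φ l c k ψ, π, q => ∀ ρ, S.Run ρ → ρ 0 = q →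
      ∃ i, ccsat S ψ (π ++ runPrefix ρ i) (ρ i) ∧
        c.eval (clsum S l (π ++ runPrefix ρ i)) k ∧
        ∀ j < i, ccsat S φ (π ++ runPrefix ρ j) (ρ j)
termination_by φ _ _ => (sizeOf φ, 0)

/-- Value `Σᵢ αᵢ·#φᵢ(σ)` of a constraint on the finite prefix `σ`. -/
def clsum {Q : Type} (S : Kripke Q) : List (ℕ × CcForm) → List Q → ℕ
  | [], _ => 0
  | (a, φ) :: t, σ => a * countH S φ [] σ + clsum S t σ
termination_by l _ => (sizeOf l, 0)

/-- `countH S φ done todo` = number of positions `j` of `todo` such that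
`(done·todo|ⱼ₋₁, todo(j)) ⊨ φ`; thus `countH S φ [] σ = #φ(σ)`. -/
def countH {Q : Type} (S : Kripke Q) (φ : CcForm) : List Q → List Q → ℕ
  | _, [] => 0
  | done, s :: t =>
      (if ccsat S φ done s then 1 else 0) + countH S φ (done ++ [s]) t
termination_by done todo => (sizeOf φ + 1, sizeOf todo)
end

mutual
/-- `SF#(Φ)`: the subformulas `ψ` of `Φ` such that `#ψ` occurs in a
constraint of `Φ`. -/
def SFnb : CcForm → List CcForm
  | .atom _ => []
  | .and φ ψ => SFnb φ ++ SFnb ψ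
  | .not φ => SFnb φ
  | .now φ => SFnb φ
  | .eu φ l _ _ ψ => l.map Prod.snd ++ SFnbL l ++ SFnb φ ++ SFnb ψ
  | .au φ l _ _ ψ => l.map Prod.snd ++ SFnbL l ++ SFnb φ ++ SFnb ψ

def SFnbL : List (ℕ × CcForm) → List CcForm
  | [] => []
  | (_, φ) :: t => SFnb φ ++ SFnbL t
end

mutual
/-- An injective coding of CCTLc formulas as natural numbers; the variable
`z_ψ` of the translation is realized as the number `encCc ψ`. -/
def encCc : CcForm → ℕ
  | .atom p => Nat.pair 0 p
  | .and φ ψ => Nat.pair 1 (Nat.pair (encCc φ) (encCc ψ))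
  | .not φ => Nat.pair 2 (encCc φ)
  | .now φ => Nat.pair 3 (encCc φ)
  | .eu φ l c k ψ => Nat.pair 4 (Nat.pair (encCc φ) (Nat.pair (encCcL l)
      (Nat.pair (match c with | .lt => 0 | .le => 1 | .eq => 2 | .ge => 3 | .gt => 4)
        (Nat.pair k (encCc ψ)))))
  | .au φ l c k ψ => Nat.pair 5 (Nat.pair (encCc φ) (Nat.pair (encCcL l)
      (Nat.pair (match c with | .lt => 0 | .le => 1 | .eq => 2 | .ge => 3 | .gt => 4)
        (Nat.pair k (encCc ψ)))))

def encCcL : List (ℕ × CcForm) → ℕ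
  | [] => 0
  | (a, φ) :: t => Nat.pair (Nat.pair a (encCc φ)) (encCcL t) + 1
end

/-- CCTLv formulas over atomic propositions `ℕ` and variables in `ℕ`. -/
inductive VForm : Type where
  | atom : ℕ → VForm
  | or : VForm → VForm → VForm
  | not : VForm → VForm
  | eu : VForm → VForm → VForm
  | au : VForm → VForm → VForm
  | bind : ℕ → VForm → VForm → VForm
  | constr : List (ℕ × ℕ) → Cmp → ℕ → VForm

def lvval (l : List (ℕ × ℕ)) (v : ℕ → ℕ) : ℕ :=
  (l.map (fun t => t.1 * v t.2)).sum

mutual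
/-- Satisfaction `(q,v,ε) ⊨ φ` of a CCTLv formula (see stmt 13 for the
role of the variable bound `k`). -/
def vsat {Q : Type} (S : Kripke Q) :
    ℕ → VForm → Q → (ℕ → ℕ) → (ℕ → Option VForm) → Prop
  | _, .atom p, q, _, _ => S.label q p
  | k, .or φ ψ, q, v, ε => vsat S k φ q v ε ∨ vsat S k ψ q v ε
  | k, .not φ, q, v, ε => ¬ vsat S k φ q v ε
  | _, .constr l c n, _, v, _ => c.eval (lvval l v) n
  | k, .bind z ψ φ, q, v, ε =>
      vsat S k φ q (Function.update v z 0) (Function.update ε z (some ψ))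
  | k, .eu φ ψ, q, v, ε => ∃ ρ, S.Run ρ ∧ ρ 0 = q ∧
      ∃ i, vsat S k ψ (ρ i) (updAlong S k v ε (runPrefix ρ i)) ε ∧
        ∀ j < i, vsat S k φ (ρ j) (updAlong S k v ε (runPrefix ρ j)) ε
  | k, .au φ ψ, q, v, ε => ∀ ρ, S.Run ρ → ρ 0 = q →
      ∃ i, vsat S k ψ (ρ i) (updAlong S k v ε (runPrefix ρ i)) ε ∧
        ∀ j < i, vsat S k φ (ρ j) (updAlong S k v ε (runPrefix ρ j)) ε
termination_by k φ _ _ _ => (k, sizeOf φ, 0)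

def updAlong {Q : Type} (S : Kripke Q) :
    ℕ → (ℕ → ℕ) → (ℕ → Option VForm) → List Q → (ℕ → ℕ)
  | _, v, _, [] => v
  | k, v, ε, r :: t => updAlong S k (updOne S k v ε r) ε t
termination_by k _ _ σ => (k, 0, sizeOf σ)

def updOne {Q : Type} (S : Kripke Q) (k : ℕ) (v : ℕ → ℕ)
    (ε : ℕ → Option VForm) (r : Q) : ℕ → ℕ :=
  fun z => if h : z < k ∧ (ε z).isSome then
      (if vsat S z ((ε z).get h.2) r v ε then v z + 1 else v z)
    else v z
termination_by (k, 0, 0)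
end

/-- All variables occurring in a CCTLv formula. -/
def VForm.vars : VForm → Finset ℕ
  | .atom _ => ∅
  | .or φ ψ => φ.vars ∪ ψ.vars
  | .not φ => φ.vars
  | .eu φ ψ => φ.vars ∪ ψ.vars
  | .au φ ψ => φ.vars ∪ ψ.vars
  | .bind z ψ φ => insert z (ψ.vars ∪ φ.vars)
  | .constr l _ _ => (l.map Prod.snd).toFinset

/-- Conjunction (derived in CCTLv). -/
def vand (a b : VForm) : VForm := .not (.or (.not a) (.not b))

/-- The translated constraint `C̄`: `#ψ` becomes the variable `z_ψ`. -/
def trL : List (ℕ × CcForm) → List (ℕ × ℕ)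
  | [] => []
  | (a, φ) :: t => (a, encCc φ) :: trL t

mutual
/-- The translation `Φ ↦ Φ̄` from CCTLc to CCTLv, defined with a fuel
parameter (any fuel `≥ sizeOf Φ` computes the translation, each recursive
call being on a structurally smaller formula). -/
def trCF : ℕ → CcForm → VForm
  | 0, _ => .atom 0
  | n + 1, .atom p => .atom p
  | n + 1, .and φ ψ => vand (trCF n φ) (trCF n ψ)
  | n + 1, .not φ => .not (trCF n φ)
  | n + 1, .now φ => bindLF n (SFnb φ) (trCF n φ)
  | n + 1, .eu φ l c k ψ =>
      .eu (trCF n φ) (vand (.constr (trL l) c k) (trCF n ψ))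
  | n + 1, .au φ l c k ψ =>
      .au (trCF n φ) (vand (.constr (trL l) c k) (trCF n ψ))
termination_by n _ => (n, 0)

/-- Binding prefix `z_{ψ₁}[ψ̄₁]. … .z_{ψ_k}[ψ̄_k]` for the translation of
the `N` modality. -/
def bindLF : ℕ → List CcForm → VForm → VForm
  | _, [], φv => φv
  | n, ψ :: t, φv => .bind (encCc ψ) (trCF n ψ) (bindLF n t φv)
termination_by n l _ => (n, sizeOf l + 1)
end

/-- The translation `Φ̄` of a CCTLc formula. -/
def trC (φ : CcForm) : VForm := trCF (sizeOf φ) φ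

set_option linter.unusedVariables false
section Basics
variable {Q : Type} (S : Kripke Q)

lemma runPrefix_zero (ρ : ℕ → Q) : runPrefix ρ 0 = [] := by simp [runPrefix]

lemma runPrefix_succ (ρ : ℕ → Q) (n : ℕ) :
    runPrefix ρ (n + 1) = runPrefix ρ n ++ [ρ n] := by
  simp [runPrefix, List.range_succ]

lemma countH_nil (φ : CcForm) (d : List Q) : countH S φ d [] = 0 := by rw [countH]

lemma countH_snoc (φ : CcForm) (σ : List Q) : ∀ (d : List Q) (r : Q),
    countH S φ d (σ ++ [r]) = countH S φ d σ + (if ccsat S φ (d ++ σ) r then 1 else 0) := by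
  induction σ with
  | nil => intro d r; rw [List.nil_append, countH, countH, countH]; simp
  | cons s t ih =>
      intro d r
      rw [List.cons_append, countH, countH, ih]
      have : d ++ s :: t = (d ++ [s]) ++ t := by simp
      rw [this, add_assoc]

lemma updAlong_nil (k : ℕ) (v : ℕ → ℕ) (ε : ℕ → Option VForm) :
    updAlong S k v ε [] = v := by rw [updAlong]

lemma updAlong_cons (k : ℕ) (v : ℕ → ℕ) (ε : ℕ → Option VForm) (r : Q) (t : List Q) :
    updAlong S k v ε (r :: t) = updAlong S k (updOne S k v ε r) ε t := by rw [updAlong]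

lemma updAlong_snoc (k : ℕ) (ε : ℕ → Option VForm) (σ : List Q) :
    ∀ (v : ℕ → ℕ) (r : Q),
    updAlong S k v ε (σ ++ [r]) = updOne S k (updAlong S k v ε σ) ε r := by
  induction σ with
  | nil => intro v r; rw [List.nil_append, updAlong_cons, updAlong_nil, updAlong_nil]
  | cons s t ih => intro v r; rw [List.cons_append, updAlong_cons, updAlong_cons, ih]

lemma chain_run (π : List Q) (ρ : ℕ → Q) (hρ : S.Run ρ) (hπ : List.Chain' S.R (π ++ [ρ 0])) :
    ∀ j, List.Chain' S.R ((π ++ runPrefix ρ j) ++ [ρ j]) := by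
  intro j
  induction j with
  | zero => simpa [runPrefix_zero] using hπ
  | succ j ih =>
      rw [runPrefix_succ, ← List.append_assoc]
      refine List.IsChain.append ih (List.isChain_singleton _) ?_
      intro x hx y hy
      rw [List.getLast?_concat] at hx
      simp at hx hy
      subst hx; subst hy
      exact hρ j

lemma lt_pair_right {a : ℕ} (h : 0 < a) (b : ℕ) : b < Nat.pair a b := by
  unfold Nat.pair; split <;> nlinarith

def cmpCode : Cmp → ℕ | .lt => 0 | .le => 1 | .eq => 2 | .ge => 3 | .gt => 4

lemma cmpCode_inj : ∀ {c c' : Cmp}, cmpCode c = cmpCode c' → c = c' := by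
  intro c c'; cases c <;> cases c' <;> simp [cmpCode]

lemma encCc_eu_def (φ : CcForm) (l : List (ℕ × CcForm)) (c : Cmp) (m : ℕ) (ψ : CcForm) :
    encCc (.eu φ l c m ψ) = Nat.pair 4 (Nat.pair (encCc φ) (Nat.pair (encCcL l)
      (Nat.pair (cmpCode c) (Nat.pair m (encCc ψ))))) := by
  cases c <;> simp [encCc, cmpCode]

lemma encCc_au_def (φ : CcForm) (l : List (ℕ × CcForm)) (c : Cmp) (m : ℕ) (ψ : CcForm) :
    encCc (.au φ l c m ψ) = Nat.pair 5 (Nat.pair (encCc φ) (Nat.pair (encCcL l)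
      (Nat.pair (cmpCode c) (Nat.pair m (encCc ψ))))) := by
  cases c <;> simp [encCc, cmpCode]

lemma encCc_and_left (φ ψ : CcForm) : encCc φ < encCc (.and φ ψ) := by
  simp only [encCc]
  exact lt_of_le_of_lt (Nat.left_le_pair _ _) (lt_pair_right one_pos _)

lemma encCc_and_right (φ ψ : CcForm) : encCc ψ < encCc (.and φ ψ) := by
  simp only [encCc]
  exact lt_of_le_of_lt (Nat.right_le_pair _ _) (lt_pair_right one_pos _)

lemma encCc_not (φ : CcForm) : encCc φ < encCc (.not φ) := by
  simp only [encCc]; exact lt_pair_right (by norm_num) _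

lemma encCc_now (φ : CcForm) : encCc φ < encCc (.now φ) := by
  simp only [encCc]; exact lt_pair_right (by norm_num) _

lemma encCc_eu_left (φ : CcForm) (l : List (ℕ × CcForm)) (c : Cmp) (m : ℕ) (ψ : CcForm) :
    encCc φ < encCc (.eu φ l c m ψ) := by
  rw [encCc_eu_def]
  exact lt_of_le_of_lt (Nat.left_le_pair _ _) (lt_pair_right (by norm_num) _)

lemma encCc_eu_right (φ : CcForm) (l : List (ℕ × CcForm)) (c : Cmp) (m : ℕ) (ψ : CcForm) :
    encCc ψ < encCc (.eu φ l c m ψ) := by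
  rw [encCc_eu_def]
  refine lt_of_le_of_lt ?_ (lt_pair_right (by norm_num) _)
  exact le_trans (Nat.right_le_pair _ _) (le_trans (Nat.right_le_pair _ _)
    (le_trans (Nat.right_le_pair _ _) (Nat.right_le_pair _ _)))

lemma encCcL_eu (φ : CcForm) (l : List (ℕ × CcForm)) (c : Cmp) (m : ℕ) (ψ : CcForm) :
    encCcL l < encCc (.eu φ l c m ψ) := by
  rw [encCc_eu_def]
  refine lt_of_le_of_lt ?_ (lt_pair_right (by norm_num) _)
  exact le_trans (Nat.left_le_pair _ _) (Nat.right_le_pair _ _)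

lemma encCc_au_left (φ : CcForm) (l : List (ℕ × CcForm)) (c : Cmp) (m : ℕ) (ψ : CcForm) :
    encCc φ < encCc (.au φ l c m ψ) := by
  rw [encCc_au_def]
  exact lt_of_le_of_lt (Nat.left_le_pair _ _) (lt_pair_right (by norm_num) _)

lemma encCc_au_right (φ : CcForm) (l : List (ℕ × CcForm)) (c : Cmp) (m : ℕ) (ψ : CcForm) :
    encCc ψ < encCc (.au φ l c m ψ) := by
  rw [encCc_au_def]
  refine lt_of_le_of_lt ?_ (lt_pair_right (by norm_num) _)
  exact le_trans (Nat.right_le_pair _ _) (le_trans (Nat.right_le_pair _ _)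
    (le_trans (Nat.right_le_pair _ _) (Nat.right_le_pair _ _)))

lemma encCcL_au (φ : CcForm) (l : List (ℕ × CcForm)) (c : Cmp) (m : ℕ) (ψ : CcForm) :
    encCcL l < encCc (.au φ l c m ψ) := by
  rw [encCc_au_def]
  refine lt_of_le_of_lt ?_ (lt_pair_right (by norm_num) _)
  exact le_trans (Nat.left_le_pair _ _) (Nat.right_le_pair _ _)

lemma encCc_mem_encCcL {a : ℕ} {χ : CcForm} : ∀ {l : List (ℕ × CcForm)}, (a, χ) ∈ l →
    encCc χ < encCcL l := by
  intro l
  induction l with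
  | nil => intro h; cases h
  | cons hd t ih =>
      obtain ⟨b, θ⟩ := hd
      intro h
      rw [encCcL]
      rcases List.mem_cons.mp h with h | h
      · obtain ⟨hb, hθ⟩ := Prod.mk.injEq .. ▸ h
        subst hθ
        have : encCc χ ≤ Nat.pair (Nat.pair b (encCc χ)) (encCcL t) :=
          le_trans (Nat.right_le_pair _ _) (Nat.left_le_pair _ _)
        omega
      · have := ih h
        have h2 : encCcL t ≤ Nat.pair (Nat.pair b (encCc θ)) (encCcL t) := Nat.right_le_pair _ _
        omega

lemma encCcL_tail_lt {b : ℕ} {θ : CcForm} {t : List (ℕ × CcForm)} :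
    encCcL t < encCcL ((b, θ) :: t) := by
  rw [encCcL]
  have h2 : encCcL t ≤ Nat.pair (Nat.pair b (encCc θ)) (encCcL t) := Nat.right_le_pair _ _
  omega

lemma sizeOf_snd_lt {a : ℕ} {χ : CcForm} {l : List (ℕ × CcForm)} (h : (a, χ) ∈ l) :
    sizeOf χ < sizeOf l := by
  have h1 := List.sizeOf_lt_of_mem h
  simp at h1; omega

lemma sizeOf_mem_map_snd {χ : CcForm} {l : List (ℕ × CcForm)} (h : χ ∈ l.map Prod.snd) :
    sizeOf χ < sizeOf l := by
  rcases List.mem_map.mp h with ⟨⟨a, χ'⟩, hm, he⟩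
  cases he; exact sizeOf_snd_lt hm

lemma encCc_mem_map_snd {χ : CcForm} {l : List (ℕ × CcForm)} (h : χ ∈ l.map Prod.snd) :
    encCc χ < encCcL l := by
  rcases List.mem_map.mp h with ⟨⟨a, χ'⟩, hm, he⟩
  cases he; exact encCc_mem_encCcL hm

lemma SFnb_subset_SFnbL {ψ : CcForm} : ∀ {l : List (ℕ × CcForm)}, ψ ∈ l.map Prod.snd →
    ∀ χ ∈ SFnb ψ, χ ∈ SFnbL l := by
  intro l
  induction l with
  | nil => intro h; cases h
  | cons hd t ih =>
      obtain ⟨b, θ⟩ := hd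
      intro h χ hχ
      rw [SFnbL]
      rcases List.mem_cons.mp ((List.map_cons ..) ▸ h) with h | h
      · subst h; exact List.mem_append.mpr (Or.inl hχ)
      · exact List.mem_append.mpr (Or.inr (ih h χ hχ))

lemma SFnb_facts : ∀ N : ℕ,
    (∀ φ : CcForm, sizeOf φ ≤ N → ∀ ψ ∈ SFnb φ, sizeOf ψ < sizeOf φ ∧ encCc ψ < encCc φ) ∧
    (∀ l : List (ℕ × CcForm), sizeOf l ≤ N →
      ∀ ψ ∈ SFnbL l, sizeOf ψ < sizeOf l ∧ encCc ψ < encCcL l) := by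
  intro N
  induction N with
  | zero =>
      constructor
      · intro φ h; exfalso; cases φ <;> simp at h
      · intro l h; exfalso; cases l <;> simp at h
  | succ N ih =>
      constructor
      · intro φ hs ψ hψ
        cases φ with
        | atom p => simp [SFnb] at hψ
        | and a b =>
            simp only [SFnb] at hψ
            have hsz : sizeOf (CcForm.and a b) = 1 + sizeOf a + sizeOf b := by simp
            rcases List.mem_append.mp hψ with h | h
            · have := ih.1 a (by omega) ψ h
              exact ⟨by omega, lt_trans this.2 (encCc_and_left a b)⟩
            · have := ih.1 b (by omega) ψ h
              exact ⟨by omega, lt_trans this.2 (encCc_and_right a b)⟩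
        | not a =>
            simp only [SFnb] at hψ
            have hsz : sizeOf (CcForm.not a) = 1 + sizeOf a := by simp
            have := ih.1 a (by omega) ψ hψ
            exact ⟨by omega, lt_trans this.2 (encCc_not a)⟩
        | now a =>
            simp only [SFnb] at hψ
            have hsz : sizeOf (CcForm.now a) = 1 + sizeOf a := by simp
            have := ih.1 a (by omega) ψ hψ
            exact ⟨by omega, lt_trans this.2 (encCc_now a)⟩
        | eu a l c m b =>
            simp only [SFnb] at hψ
            have hsz : sizeOf (CcForm.eu a l c m b)
                = 1 + sizeOf a + sizeOf l + sizeOf c + sizeOf m + sizeOf b := by simp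
            rcases List.mem_append.mp hψ with h | h
            rcases List.mem_append.mp h with h | h
            rcases List.mem_append.mp h with h | h
            · exact ⟨lt_of_lt_of_le (sizeOf_mem_map_snd h) (by omega),
                lt_trans (encCc_mem_map_snd h) (encCcL_eu a l c m b)⟩
            · have := ih.2 l (by omega) ψ h
              exact ⟨by omega, lt_trans this.2 (encCcL_eu a l c m b)⟩
            · have := ih.1 a (by omega) ψ h
              exact ⟨by omega, lt_trans this.2 (encCc_eu_left a l c m b)⟩
            · have := ih.1 b (by omega) ψ h
              exact ⟨by omega, lt_trans this.2 (encCc_eu_right a l c m b)⟩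
        | au a l c m b =>
            simp only [SFnb] at hψ
            have hsz : sizeOf (CcForm.au a l c m b)
                = 1 + sizeOf a + sizeOf l + sizeOf c + sizeOf m + sizeOf b := by simp
            rcases List.mem_append.mp hψ with h | h
            rcases List.mem_append.mp h with h | h
            rcases List.mem_append.mp h with h | h
            · exact ⟨lt_of_lt_of_le (sizeOf_mem_map_snd h) (by omega),
                lt_trans (encCc_mem_map_snd h) (encCcL_au a l c m b)⟩
            · have := ih.2 l (by omega) ψ h
              exact ⟨by omega, lt_trans this.2 (encCcL_au a l c m b)⟩
            · have := ih.1 a (by omega) ψ h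
              exact ⟨by omega, lt_trans this.2 (encCc_au_left a l c m b)⟩
            · have := ih.1 b (by omega) ψ h
              exact ⟨by omega, lt_trans this.2 (encCc_au_right a l c m b)⟩
      · intro l hs ψ hψ
        cases l with
        | nil => rw [SFnbL] at hψ; cases hψ
        | cons hd t =>
            obtain ⟨b, θ⟩ := hd
            rw [SFnbL] at hψ
            have hsz : sizeOf ((b, θ) :: t) = 1 + (1 + sizeOf b + sizeOf θ) + sizeOf t := by
              simp
            rcases List.mem_append.mp hψ with h | h
            · have := ih.1 θ (by omega) ψ h
              refine ⟨by omega, lt_trans this.2 ?_⟩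
              rw [encCcL]
              have : encCc θ ≤ Nat.pair (Nat.pair b (encCc θ)) (encCcL t) :=
                le_trans (Nat.right_le_pair _ _) (Nat.left_le_pair _ _)
              omega
            · have := ih.2 t (by omega) ψ h
              exact ⟨by omega, lt_trans this.2 encCcL_tail_lt⟩

lemma SFnb_size {φ ψ : CcForm} (h : ψ ∈ SFnb φ) : sizeOf ψ < sizeOf φ :=
  ((SFnb_facts (sizeOf φ)).1 φ le_rfl ψ h).1

lemma SFnb_enc {φ ψ : CcForm} (h : ψ ∈ SFnb φ) : encCc ψ < encCc φ :=
  ((SFnb_facts (sizeOf φ)).1 φ le_rfl ψ h).2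

lemma SFnb_trans_aux : ∀ N : ℕ,
    (∀ φ : CcForm, sizeOf φ ≤ N → ∀ ψ ∈ SFnb φ, ∀ χ ∈ SFnb ψ, χ ∈ SFnb φ) ∧
    (∀ l : List (ℕ × CcForm), sizeOf l ≤ N →
      ∀ ψ ∈ SFnbL l, ∀ χ ∈ SFnb ψ, χ ∈ SFnbL l) := by
  intro N
  induction N with
  | zero =>
      constructor
      · intro φ h; exfalso; cases φ <;> simp at h
      · intro l h; exfalso; cases l <;> simp at h
  | succ N ih =>
      constructor
      · intro φ hs ψ hψ χ hχ
        cases φ with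
        | atom p => simp [SFnb] at hψ
        | and a b =>
            simp only [SFnb] at hψ ⊢
            have hsz : sizeOf (CcForm.and a b) = 1 + sizeOf a + sizeOf b := by simp
            rcases List.mem_append.mp hψ with h | h
            · exact List.mem_append.mpr (Or.inl (ih.1 a (by omega) ψ h χ hχ))
            · exact List.mem_append.mpr (Or.inr (ih.1 b (by omega) ψ h χ hχ))
        | not a =>
            simp only [SFnb] at hψ ⊢
            have hsz : sizeOf (CcForm.not a) = 1 + sizeOf a := by simp
            exact ih.1 a (by omega) ψ hψ χ hχ
        | now a =>
            simp only [SFnb] at hψ ⊢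
            have hsz : sizeOf (CcForm.now a) = 1 + sizeOf a := by simp
            exact ih.1 a (by omega) ψ hψ χ hχ
        | eu a l c m b =>
            simp only [SFnb] at hψ ⊢
            have hsz : sizeOf (CcForm.eu a l c m b)
                = 1 + sizeOf a + sizeOf l + sizeOf c + sizeOf m + sizeOf b := by simp
            rcases List.mem_append.mp hψ with h | h
            rcases List.mem_append.mp h with h | h
            rcases List.mem_append.mp h with h | h
            · exact List.mem_append.mpr (Or.inl (List.mem_append.mpr (Or.inl
                (List.mem_append.mpr (Or.inr (SFnb_subset_SFnbL h χ hχ))))))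
            · exact List.mem_append.mpr (Or.inl (List.mem_append.mpr (Or.inl
                (List.mem_append.mpr (Or.inr (ih.2 l (by omega) ψ h χ hχ))))))
            · exact List.mem_append.mpr (Or.inl (List.mem_append.mpr
                (Or.inr (ih.1 a (by omega) ψ h χ hχ))))
            · exact List.mem_append.mpr (Or.inr (ih.1 b (by omega) ψ h χ hχ))
        | au a l c m b =>
            simp only [SFnb] at hψ ⊢
            have hsz : sizeOf (CcForm.au a l c m b)
                = 1 + sizeOf a + sizeOf l + sizeOf c + sizeOf m + sizeOf b := by simp
            rcases List.mem_append.mp hψ with h | h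
            rcases List.mem_append.mp h with h | h
            rcases List.mem_append.mp h with h | h
            · exact List.mem_append.mpr (Or.inl (List.mem_append.mpr (Or.inl
                (List.mem_append.mpr (Or.inr (SFnb_subset_SFnbL h χ hχ))))))
            · exact List.mem_append.mpr (Or.inl (List.mem_append.mpr (Or.inl
                (List.mem_append.mpr (Or.inr (ih.2 l (by omega) ψ h χ hχ))))))
            · exact List.mem_append.mpr (Or.inl (List.mem_append.mpr
                (Or.inr (ih.1 a (by omega) ψ h χ hχ))))
            · exact List.mem_append.mpr (Or.inr (ih.1 b (by omega) ψ h χ hχ))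
      · intro l hs ψ hψ χ hχ
        cases l with
        | nil => rw [SFnbL] at hψ; cases hψ
        | cons hd t =>
            obtain ⟨b, θ⟩ := hd
            rw [SFnbL] at hψ ⊢
            have hsz : sizeOf ((b, θ) :: t) = 1 + (1 + sizeOf b + sizeOf θ) + sizeOf t := by
              simp
            rcases List.mem_append.mp hψ with h | h
            · exact List.mem_append.mpr (Or.inl (ih.1 θ (by omega) ψ h χ hχ))
            · exact List.mem_append.mpr (Or.inr (ih.2 t (by omega) ψ h χ hχ))

lemma SFnb_trans {φ ψ χ : CcForm} (h1 : ψ ∈ SFnb φ) (h2 : χ ∈ SFnb ψ) : χ ∈ SFnb φ :=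
  (SFnb_trans_aux (sizeOf φ)).1 φ le_rfl ψ h1 χ h2

lemma encCc_inj_aux : ∀ N : ℕ,
    (∀ φ φ' : CcForm, sizeOf φ ≤ N → encCc φ = encCc φ' → φ = φ') ∧
    (∀ l l' : List (ℕ × CcForm), sizeOf l ≤ N → encCcL l = encCcL l' → l = l') := by
  intro N
  induction N with
  | zero =>
      constructor
      · intro φ _ h; exfalso; cases φ <;> simp at h
      · intro l _ h; exfalso; cases l <;> simp at h
  | succ N ih =>
      constructor
      · intro φ φ' hs h
        cases φ <;> cases φ' <;>
          simp only [encCc, encCc_eu_def, encCc_au_def, Nat.pair_eq_pair] at h <;>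
          try omega
        case atom.atom => simp [h.2]
        case and.and a b a' b' =>
            have hsz : sizeOf (CcForm.and a b) = 1 + sizeOf a + sizeOf b := by simp
            rw [ih.1 a a' (by omega) h.2.1, ih.1 b b' (by omega) h.2.2]
        case not.not a a' =>
            have hsz : sizeOf (CcForm.not a) = 1 + sizeOf a := by simp
            rw [ih.1 a a' (by omega) h.2]
        case now.now a a' =>
            have hsz : sizeOf (CcForm.now a) = 1 + sizeOf a := by simp
            rw [ih.1 a a' (by omega) h.2]
        case eu.eu a l c m b a' l' c' m' b' =>
            have hsz : sizeOf (CcForm.eu a l c m b)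
                = 1 + sizeOf a + sizeOf l + sizeOf c + sizeOf m + sizeOf b := by simp
            obtain ⟨-, h1, h2, h3, h4, h5⟩ := h
            rw [ih.1 a a' (by omega) h1, ih.2 l l' (by omega) h2, cmpCode_inj h3, h4,
              ih.1 b b' (by omega) h5]
        case au.au a l c m b a' l' c' m' b' =>
            have hsz : sizeOf (CcForm.au a l c m b)
                = 1 + sizeOf a + sizeOf l + sizeOf c + sizeOf m + sizeOf b := by simp
            obtain ⟨-, h1, h2, h3, h4, h5⟩ := h
            rw [ih.1 a a' (by omega) h1, ih.2 l l' (by omega) h2, cmpCode_inj h3, h4,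
              ih.1 b b' (by omega) h5]
      · intro l l' hs h
        cases l with
        | nil => cases l' with
          | nil => rfl
          | cons hd t => exfalso; obtain ⟨b, θ⟩ := hd; rw [encCcL, encCcL] at h; omega
        | cons hd t =>
            obtain ⟨b, θ⟩ := hd
            cases l' with
            | nil => exfalso; rw [encCcL, encCcL] at h; omega
            | cons hd' t' =>
                obtain ⟨b', θ'⟩ := hd'
                rw [encCcL, encCcL] at h
                have h2 := Nat.pair_eq_pair.mp (by omega :
                  Nat.pair (Nat.pair b (encCc θ)) (encCcL t)
                    = Nat.pair (Nat.pair b' (encCc θ')) (encCcL t'))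
                obtain ⟨h3, h4⟩ := h2
                obtain ⟨h5, h6⟩ := Nat.pair_eq_pair.mp h3
                have hsz : sizeOf ((b, θ) :: t) = 1 + (1 + sizeOf b + sizeOf θ) + sizeOf t := by
                  simp
                rw [h5, ih.1 θ θ' (by omega) h6, ih.2 t t' (by omega) h4]

lemma encCc_inj {φ φ' : CcForm} (h : encCc φ = encCc φ') : φ = φ' :=
  (encCc_inj_aux (sizeOf φ)).1 φ φ' le_rfl h

lemma sizeOf_pos_cc (φ : CcForm) : 0 < sizeOf φ := by cases φ <;> simp +arith +decide

lemma bindLF_congr {m n : ℕ} : ∀ (l : List CcForm) (x x' : VForm),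
    (∀ ψ ∈ l, trCF m ψ = trCF n ψ) → x = x' → bindLF m l x = bindLF n l x' := by
  intro l
  induction l with
  | nil => intro x x' h hx; rw [bindLF, bindLF, hx]
  | cons ψ t ih =>
      intro x x' h hx
      rw [bindLF, bindLF, h ψ (List.mem_cons_self ..), ih x x' (fun χ hχ => h χ (List.mem_cons_of_mem _ hχ)) hx]

lemma trCF_eq_aux : ∀ N : ℕ, ∀ φ : CcForm, sizeOf φ ≤ N → ∀ m n : ℕ,
    sizeOf φ ≤ m → sizeOf φ ≤ n → trCF m φ = trCF n φ := by
  intro N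
  induction N with
  | zero => intro φ h; exfalso; have := sizeOf_pos_cc φ; omega
  | succ N ih =>
      intro φ hs m n hm hn
      have hp := sizeOf_pos_cc φ
      obtain ⟨m', rfl⟩ : ∃ m', m = m' + 1 := ⟨m - 1, by omega⟩
      obtain ⟨n', rfl⟩ : ∃ n', n = n' + 1 := ⟨n - 1, by omega⟩
      cases φ with
      | atom p => rw [trCF, trCF]
      | and a b =>
          have hsz : sizeOf (CcForm.and a b) = 1 + sizeOf a + sizeOf b := by simp
          rw [trCF, trCF]
          rw [ih a (by omega) m' n' (by omega) (by omega),
            ih b (by omega) m' n' (by omega) (by omega)]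
      | not a =>
          have hsz : sizeOf (CcForm.not a) = 1 + sizeOf a := by simp
          rw [trCF, trCF, ih a (by omega) m' n' (by omega) (by omega)]
      | now a =>
          have hsz : sizeOf (CcForm.now a) = 1 + sizeOf a := by simp
          rw [trCF, trCF]
          refine bindLF_congr _ _ _ (fun ψ hψ => ?_) (ih a (by omega) m' n' (by omega) (by omega))
          have h1 := SFnb_size hψ
          exact ih ψ (by omega) m' n' (by omega) (by omega)
      | eu a l c m b =>
          have hsz : sizeOf (CcForm.eu a l c m b)
              = 1 + sizeOf a + sizeOf l + sizeOf c + sizeOf m + sizeOf b := by simp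
          rw [trCF, trCF]
          rw [ih a (by omega) m' n' (by omega) (by omega),
            ih b (by omega) m' n' (by omega) (by omega)]
      | au a l c m b =>
          have hsz : sizeOf (CcForm.au a l c m b)
              = 1 + sizeOf a + sizeOf l + sizeOf c + sizeOf m + sizeOf b := by simp
          rw [trCF, trCF]
          rw [ih a (by omega) m' n' (by omega) (by omega),
            ih b (by omega) m' n' (by omega) (by omega)]

lemma trCF_eq_trC {φ : CcForm} {n : ℕ} (h : sizeOf φ ≤ n) : trCF n φ = trC φ := by
  rw [trC]; exact trCF_eq_aux n φ h n (sizeOf φ) h le_rfl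

/-- The binding prefix with fully-translated bodies. -/
def bindL : List CcForm → VForm → VForm
  | [], x => x
  | ψ :: t, x => .bind (encCc ψ) (trC ψ) (bindL t x)

lemma bindLF_eq_bindL {n : ℕ} : ∀ (l : List CcForm) (x : VForm),
    (∀ ψ ∈ l, sizeOf ψ ≤ n) → bindLF n l x = bindL l x := by
  intro l
  induction l with
  | nil => intro x h; rw [bindLF, bindL]
  | cons ψ t ih =>
      intro x h
      rw [bindLF, bindL, trCF_eq_trC (h ψ (List.mem_cons_self ..)),
        ih x (fun χ hχ => h χ (List.mem_cons_of_mem _ hχ))]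

lemma trC_atom (p : ℕ) : trC (.atom p) = .atom p := by
  rw [trC]
  have : sizeOf (CcForm.atom p) = (sizeOf p) + 1 := by simp; omega
  rw [this, trCF]

lemma trC_and (a b : CcForm) : trC (.and a b) = vand (trC a) (trC b) := by
  rw [trC]
  have : sizeOf (CcForm.and a b) = (sizeOf a + sizeOf b) + 1 := by simp; omega
  rw [this, trCF, trCF_eq_trC (by omega), trCF_eq_trC (by omega)]

lemma trC_not (a : CcForm) : trC (.not a) = .not (trC a) := by
  rw [trC]
  have : sizeOf (CcForm.not a) = sizeOf a + 1 := by simp; omega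
  rw [this, trCF, trCF_eq_trC (by omega)]

lemma trC_now (a : CcForm) : trC (.now a) = bindL (SFnb a) (trC a) := by
  rw [trC]
  have : sizeOf (CcForm.now a) = sizeOf a + 1 := by simp; omega
  rw [this, trCF, trCF_eq_trC (le_refl _)]
  exact bindLF_eq_bindL _ _ (fun ψ hψ => le_of_lt (SFnb_size hψ))

lemma trC_eu (a : CcForm) (l : List (ℕ × CcForm)) (c : Cmp) (m : ℕ) (b : CcForm) :
    trC (.eu a l c m b) = .eu (trC a) (vand (.constr (trL l) c m) (trC b)) := by
  rw [trC]
  have : sizeOf (CcForm.eu a l c m b)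
      = (sizeOf a + sizeOf l + sizeOf c + sizeOf m + sizeOf b) + 1 := by simp; omega
  rw [this, trCF, trCF_eq_trC (by omega), trCF_eq_trC (by omega)]

lemma trC_au (a : CcForm) (l : List (ℕ × CcForm)) (c : Cmp) (m : ℕ) (b : CcForm) :
    trC (.au a l c m b) = .au (trC a) (vand (.constr (trL l) c m) (trC b)) := by
  rw [trC]
  have : sizeOf (CcForm.au a l c m b)
      = (sizeOf a + sizeOf l + sizeOf c + sizeOf m + sizeOf b) + 1 := by simp; omega
  rw [this, trCF, trCF_eq_trC (by omega), trCF_eq_trC (by omega)]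

lemma vand_vars (a b : VForm) : (vand a b).vars = a.vars ∪ b.vars := by
  simp [vand, VForm.vars]

lemma mem_trL_map_snd {y : ℕ} : ∀ {l : List (ℕ × CcForm)},
    y ∈ (trL l).map Prod.snd → ∃ χ ∈ l.map Prod.snd, y = encCc χ := by
  intro l
  induction l with
  | nil => intro h; rw [trL] at h; cases h
  | cons hd t ih =>
      obtain ⟨a, χ⟩ := hd
      intro h
      rw [trL] at h
      rcases List.mem_cons.mp ((List.map_cons ..) ▸ h) with h | h
      · exact ⟨χ, by simp, h⟩
      · obtain ⟨χ', h1, h2⟩ := ih h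
        exact ⟨χ', by simp at h1 ⊢; exact Or.inr h1, h2⟩

lemma mem_bindL_vars {y : ℕ} : ∀ (l : List CcForm) (x : VForm),
    y ∈ (bindL l x).vars → (∃ ψ ∈ l, y = encCc ψ ∨ y ∈ (trC ψ).vars) ∨ y ∈ x.vars := by
  intro l
  induction l with
  | nil => intro x h; rw [bindL] at h; exact Or.inr h
  | cons ψ t ih =>
      intro x h
      rw [bindL] at h
      simp only [VForm.vars, Finset.mem_insert, Finset.mem_union] at h
      rcases h with h | h | h
      · exact Or.inl ⟨ψ, List.mem_cons_self .., Or.inl h⟩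
      · exact Or.inl ⟨ψ, List.mem_cons_self .., Or.inr h⟩
      · rcases ih x h with ⟨ψ', h1, h2⟩ | h1
        · exact Or.inl ⟨ψ', List.mem_cons_of_mem _ h1, h2⟩
        · exact Or.inr h1

lemma bindL_vars_sup : ∀ (l : List CcForm) (x : VForm),
    (∀ ψ ∈ l, encCc ψ ∈ (bindL l x).vars) ∧ x.vars ⊆ (bindL l x).vars := by
  intro l
  induction l with
  | nil => intro x; exact ⟨by simp, by rw [bindL]⟩
  | cons ψ t ih =>
      intro x
      rw [bindL]
      constructor
      · intro χ hχ
        simp only [VForm.vars, Finset.mem_insert, Finset.mem_union]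
        rcases List.mem_cons.mp hχ with h | h
        · exact Or.inl (by rw [h])
        · exact Or.inr (Or.inr ((ih x).1 χ h))
      · intro y hy
        simp only [VForm.vars, Finset.mem_insert, Finset.mem_union]
        exact Or.inr (Or.inr ((ih x).2 hy))

lemma vars_trC_aux : ∀ N : ℕ, ∀ φ : CcForm, sizeOf φ ≤ N →
    ∀ y ∈ (trC φ).vars, ∃ χ ∈ SFnb φ, y = encCc χ := by
  intro N
  induction N with
  | zero => intro φ h; exfalso; have := sizeOf_pos_cc φ; omega
  | succ N ih =>
      intro φ hs y hy
      cases φ with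
      | atom p => rw [trC_atom] at hy; simp [VForm.vars] at hy
      | and a b =>
          have hsz : sizeOf (CcForm.and a b) = 1 + sizeOf a + sizeOf b := by simp
          rw [trC_and, vand_vars] at hy
          simp only [SFnb]
          rcases Finset.mem_union.mp hy with h | h
          · obtain ⟨χ, h1, h2⟩ := ih a (by omega) y h
            exact ⟨χ, List.mem_append.mpr (Or.inl h1), h2⟩
          · obtain ⟨χ, h1, h2⟩ := ih b (by omega) y h
            exact ⟨χ, List.mem_append.mpr (Or.inr h1), h2⟩
      | not a =>
          have hsz : sizeOf (CcForm.not a) = 1 + sizeOf a := by simp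
          rw [trC_not] at hy
          simp only [VForm.vars] at hy
          simpa only [SFnb] using ih a (by omega) y hy
      | now a =>
          have hsz : sizeOf (CcForm.now a) = 1 + sizeOf a := by simp
          rw [trC_now] at hy
          simp only [SFnb]
          rcases mem_bindL_vars _ _ hy with ⟨ψ, h1, h2 | h2⟩ | h1
          · exact ⟨ψ, h1, h2⟩
          · obtain ⟨χ, h3, h4⟩ := ih ψ (by have := SFnb_size h1; omega) y h2
            exact ⟨χ, SFnb_trans h1 h3, h4⟩
          · exact ih a (by omega) y h1
      | eu a l c m b =>
          have hsz : sizeOf (CcForm.eu a l c m b)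
              = 1 + sizeOf a + sizeOf l + sizeOf c + sizeOf m + sizeOf b := by simp
          rw [trC_eu] at hy
          simp only [VForm.vars, vand_vars, Finset.mem_union] at hy
          simp only [SFnb]
          rcases hy with h | h | h
          · obtain ⟨χ, h1, h2⟩ := ih a (by omega) y h
            exact ⟨χ, by simp only [List.mem_append]; tauto, h2⟩
          · rw [List.mem_toFinset] at h
            obtain ⟨χ, h1, h2⟩ := mem_trL_map_snd h
            exact ⟨χ, by simp only [List.mem_append]; tauto, h2⟩
          · obtain ⟨χ, h1, h2⟩ := ih b (by omega) y h
            exact ⟨χ, by simp only [List.mem_append]; tauto, h2⟩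
      | au a l c m b =>
          have hsz : sizeOf (CcForm.au a l c m b)
              = 1 + sizeOf a + sizeOf l + sizeOf c + sizeOf m + sizeOf b := by simp
          rw [trC_au] at hy
          simp only [VForm.vars, vand_vars, Finset.mem_union] at hy
          simp only [SFnb]
          rcases hy with h | h | h
          · obtain ⟨χ, h1, h2⟩ := ih a (by omega) y h
            exact ⟨χ, by simp only [List.mem_append]; tauto, h2⟩
          · rw [List.mem_toFinset] at h
            obtain ⟨χ, h1, h2⟩ := mem_trL_map_snd h
            exact ⟨χ, by simp only [List.mem_append]; tauto, h2⟩
          · obtain ⟨χ, h1, h2⟩ := ih b (by omega) y h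
            exact ⟨χ, by simp only [List.mem_append]; tauto, h2⟩

lemma vars_trC {φ : CcForm} {y : ℕ} (h : y ∈ (trC φ).vars) : ∃ χ ∈ SFnb φ, y = encCc χ :=
  vars_trC_aux (sizeOf φ) φ le_rfl y h

lemma vars_trC_lt {φ : CcForm} {y : ℕ} (h : y ∈ (trC φ).vars) : y < encCc φ := by
  obtain ⟨χ, h1, rfl⟩ := vars_trC h
  exact SFnb_enc h1

/-- Wellformedness of a CCTLv formula: every `bind z ψ` has `ψ.vars < z`. -/
def VForm.wf : VForm → Prop
  | .atom _ => True
  | .or a b => a.wf ∧ b.wf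
  | .not a => a.wf
  | .eu a b => a.wf ∧ b.wf
  | .au a b => a.wf ∧ b.wf
  | .bind z ψ φ => (∀ y ∈ ψ.vars, y < z) ∧ ψ.wf ∧ φ.wf
  | .constr _ _ _ => True

lemma vand_wf {a b : VForm} (ha : a.wf) (hb : b.wf) : (vand a b).wf := by
  simp [vand, VForm.wf]; exact ⟨ha, hb⟩

lemma bindL_wf : ∀ (l : List CcForm) (x : VForm),
    (∀ ψ ∈ l, (trC ψ).wf) → x.wf → (bindL l x).wf := by
  intro l
  induction l with
  | nil => intro x _ hx; rw [bindL]; exact hx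
  | cons ψ t ih =>
      intro x h hx
      rw [bindL]
      exact ⟨fun y hy => vars_trC_lt hy, h ψ (List.mem_cons_self ..),
        ih x (fun χ hχ => h χ (List.mem_cons_of_mem _ hχ)) hx⟩

lemma wf_trC : ∀ N : ℕ, ∀ φ : CcForm, sizeOf φ ≤ N → (trC φ).wf := by
  intro N
  induction N with
  | zero => intro φ h; exfalso; have := sizeOf_pos_cc φ; omega
  | succ N ih =>
      intro φ hs
      cases φ with
      | atom p => rw [trC_atom]; trivial
      | and a b =>
          have hsz : sizeOf (CcForm.and a b) = 1 + sizeOf a + sizeOf b := by simp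
          rw [trC_and]; exact vand_wf (ih a (by omega)) (ih b (by omega))
      | not a =>
          have hsz : sizeOf (CcForm.not a) = 1 + sizeOf a := by simp
          rw [trC_not]; exact ih a (by omega)
      | now a =>
          have hsz : sizeOf (CcForm.now a) = 1 + sizeOf a := by simp
          rw [trC_now]
          exact bindL_wf _ _ (fun ψ hψ => ih ψ (by have := SFnb_size hψ; omega)) (ih a (by omega))
      | eu a l c m b =>
          have hsz : sizeOf (CcForm.eu a l c m b)
              = 1 + sizeOf a + sizeOf l + sizeOf c + sizeOf m + sizeOf b := by simp
          rw [trC_eu]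
          exact ⟨ih a (by omega), vand_wf trivial (ih b (by omega))⟩
      | au a l c m b =>
          have hsz : sizeOf (CcForm.au a l c m b)
              = 1 + sizeOf a + sizeOf l + sizeOf c + sizeOf m + sizeOf b := by simp
          rw [trC_au]
          exact ⟨ih a (by omega), vand_wf trivial (ih b (by omega))⟩

lemma trC_wf (φ : CcForm) : (trC φ).wf := wf_trC (sizeOf φ) φ le_rfl

lemma lvval_congr {l : List (ℕ × ℕ)} {v v' : ℕ → ℕ}
    (h : ∀ t ∈ l, v t.2 = v' t.2) : lvval l v = lvval l v' := by
  unfold lvval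
  induction l with
  | nil => rfl
  | cons hd t ih =>
      simp only [List.map_cons, List.sum_cons]
      rw [h hd (List.mem_cons_self ..), ih (fun t ht => h t (List.mem_cons_of_mem _ ht))]

lemma vsat_vand {Q : Type} (S : Kripke Q) (k : ℕ) (a b : VForm) (q : Q) (v : ℕ → ℕ)
    (ε : ℕ → Option VForm) :
    vsat S k (vand a b) q v ε ↔ (vsat S k a q v ε ∧ vsat S k b q v ε) := by
  simp only [vand, vsat]; tauto

/-- `ε` is "good" on the set `G` of positions: bound formulas there are
wellformed with variables in `G` below the position. -/
def epsGood (G : Set ℕ) (ε : ℕ → Option VForm) : Prop :=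
  ∀ y ∈ G, ∀ χ : VForm, ε y = some χ → χ.wf ∧ ∀ w ∈ χ.vars, w ∈ G ∧ w < y

lemma lemN {Q : Type} (S : Kripke Q) : ∀ n k k' : ℕ, k + k' ≤ n → ∀ G : Set ℕ,
    ∀ φ : VForm, φ.wf → (∀ y ∈ φ.vars, y ∈ G ∧ y < k ∧ y < k') →
    ∀ (v v' : ℕ → ℕ) (ε : ℕ → Option VForm), epsGood G ε →
    (∀ y ∈ G, y < k → y < k' → v y = v' y) →
    ∀ q, (vsat S k φ q v ε ↔ vsat S k' φ q v' ε) := by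
  intro n
  induction n using Nat.strong_induction_on with
  | _ n IHn =>
  intro k k' hkk G
  have updO : ∀ (ε : ℕ → Option VForm), epsGood G ε → ∀ (v v' : ℕ → ℕ),
      (∀ y ∈ G, y < k → y < k' → v y = v' y) → ∀ (r : Q),
      ∀ y ∈ G, y < k → y < k' → updOne S k v ε r y = updOne S k' v' ε r y := by
    intro ε hG v v' hvv r y hy h1 h2
    simp only [updOne]
    by_cases hs : (ε y).isSome
    · rw [dif_pos ⟨h1, hs⟩, dif_pos ⟨h2, hs⟩]
      obtain ⟨χ, hχ⟩ := Option.isSome_iff_exists.mp hs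
      have hget : (ε y).get hs = χ := by simp [hχ]
      obtain ⟨hwf, hvars⟩ := hG y hy χ hχ
      have hiff : vsat S y χ r v ε ↔ vsat S y χ r v' ε := by
        refine IHn (y + y) (by omega) y y le_rfl G χ hwf
          (fun w hw => ⟨(hvars w hw).1, (hvars w hw).2, (hvars w hw).2⟩) v v' ε hG
          (fun w hw hw1 hw2 => hvv w hw (by omega) (by omega)) r
      rw [hget, hvv y hy h1 h2]
      exact if_congr hiff rfl rfl
    · rw [dif_neg (fun h => hs h.2), dif_neg (fun h => hs h.2)]
      exact hvv y hy h1 h2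
  have updA : ∀ (ε : ℕ → Option VForm), epsGood G ε → ∀ (σ : List Q) (v v' : ℕ → ℕ),
      (∀ y ∈ G, y < k → y < k' → v y = v' y) →
      ∀ y ∈ G, y < k → y < k' → updAlong S k v ε σ y = updAlong S k' v' ε σ y := by
    intro ε hG σ
    induction σ with
    | nil => intro v v' hvv y hy h1 h2; rw [updAlong_nil, updAlong_nil]; exact hvv y hy h1 h2
    | cons r t ih =>
        intro v v' hvv y hy h1 h2
        rw [updAlong_cons, updAlong_cons]
        exact ih _ _ (updO ε hG v v' hvv r) y hy h1 h2
  intro φ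
  induction φ with
  | atom p => intro _ _ v v' ε hG hvv q; simp only [vsat]
  | or a b iha ihb =>
      intro hwf hvars v v' ε hG hvv q
      simp only [vsat]
      exact or_congr
        (iha hwf.1 (fun y hy => hvars y (by simp [VForm.vars]; exact Or.inl hy)) v v' ε hG hvv q)
        (ihb hwf.2 (fun y hy => hvars y (by simp [VForm.vars]; exact Or.inr hy)) v v' ε hG hvv q)
  | not a iha =>
      intro hwf hvars v v' ε hG hvv q
      simp only [vsat]
      exact not_congr (iha hwf hvars v v' ε hG hvv q)
  | eu a b iha ihb =>
      intro hwf hvars v v' ε hG hvv q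
      simp only [vsat]
      refine exists_congr fun ρ => and_congr_right fun hρ => and_congr_right fun h0 =>
        exists_congr fun i => and_congr ?_ ?_
      · exact ihb hwf.2 (fun y hy => hvars y (by simp [VForm.vars]; exact Or.inr hy)) _ _ ε hG
          (updA ε hG _ v v' hvv) _
      · refine forall_congr' fun j => imp_congr_right fun hj => ?_
        exact iha hwf.1 (fun y hy => hvars y (by simp [VForm.vars]; exact Or.inl hy)) _ _ ε hG
          (updA ε hG _ v v' hvv) _
  | au a b iha ihb =>
      intro hwf hvars v v' ε hG hvv q
      simp only [vsat]
      refine forall_congr' fun ρ => imp_congr_right fun hρ => imp_congr_right fun h0 =>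
        exists_congr fun i => and_congr ?_ ?_
      · exact ihb hwf.2 (fun y hy => hvars y (by simp [VForm.vars]; exact Or.inr hy)) _ _ ε hG
          (updA ε hG _ v v' hvv) _
      · refine forall_congr' fun j => imp_congr_right fun hj => ?_
        exact iha hwf.1 (fun y hy => hvars y (by simp [VForm.vars]; exact Or.inl hy)) _ _ ε hG
          (updA ε hG _ v v' hvv) _
  | bind z ψ φ ihψ ihφ =>
      intro hwf hvars v v' ε hG hvv q
      simp only [vsat]
      have hzG := hvars z (by simp [VForm.vars])
      refine ihφ hwf.2.2 (fun y hy => hvars y (by simp [VForm.vars]; tauto)) _ _ _ ?_ ?_ q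
      · intro y hy χ hχ
        by_cases hyz : y = z
        · subst hyz
          rw [Function.update_self] at hχ
          cases hχ
          exact ⟨hwf.2.1, fun w hw => ⟨(hvars w (by simp [VForm.vars]; tauto)).1, hwf.1 w hw⟩⟩
        · rw [Function.update_of_ne hyz] at hχ
          exact hG y hy χ hχ
      · intro y hy h1 h2
        by_cases hyz : y = z
        · subst hyz; rw [Function.update_self, Function.update_self]
        · rw [Function.update_of_ne hyz, Function.update_of_ne hyz]
          exact hvv y hy h1 h2
  | constr l c m =>
      intro _ hvars v v' ε hG hvv q
      simp only [vsat]
      rw [lvval_congr (v := v) (v' := v') (fun t ht => by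
        have := hvars t.2 (by
          simp only [VForm.vars]
          exact List.mem_toFinset.mpr (List.mem_map_of_mem ht))
        exact hvv t.2 this.1 this.2.1 this.2.2)]

/-- Valuation after the binding prefix. -/
def vAfter : List CcForm → (ℕ → ℕ) → (ℕ → ℕ)
  | [], v => v
  | ψ :: t, v => vAfter t (Function.update v (encCc ψ) 0)

/-- Environment after the binding prefix. -/
def eAfter : List CcForm → (ℕ → Option VForm) → (ℕ → Option VForm)
  | [], ε => ε
  | ψ :: t, ε => eAfter t (Function.update ε (encCc ψ) (some (trC ψ)))

lemma vsat_bindL {Q : Type} (S : Kripke Q) (k : ℕ) : ∀ (l : List CcForm) (x : VForm) (q : Q)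
    (v : ℕ → ℕ) (ε : ℕ → Option VForm),
    vsat S k (bindL l x) q v ε ↔ vsat S k x q (vAfter l v) (eAfter l ε) := by
  intro l
  induction l with
  | nil => intro x q v ε; rw [bindL, vAfter, eAfter]
  | cons ψ t ih =>
      intro x q v ε
      rw [bindL, vAfter, eAfter]
      simp only [vsat]
      exact ih x q _ _

lemma after_untouched {p : ℕ} : ∀ (l : List CcForm) (v : ℕ → ℕ) (ε : ℕ → Option VForm),
    (∀ ψ ∈ l, encCc ψ ≠ p) → vAfter l v p = v p ∧ eAfter l ε p = ε p := by
  intro l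
  induction l with
  | nil => intro v ε _; rw [vAfter, eAfter]; exact ⟨rfl, rfl⟩
  | cons ψ t ih =>
      intro v ε h
      rw [vAfter, eAfter]
      obtain ⟨h1, h2⟩ := ih _ _ (fun χ hχ => h χ (List.mem_cons_of_mem _ hχ))
      rw [h1, h2, Function.update_of_ne (fun hp => h ψ (List.mem_cons_self ..) hp.symm),
        Function.update_of_ne (fun hp => h ψ (List.mem_cons_self ..) hp.symm)]
      exact ⟨rfl, rfl⟩

lemma after_mem : ∀ (l : List CcForm) (v : ℕ → ℕ) (ε : ℕ → Option VForm), ∀ ψ ∈ l,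
    eAfter l ε (encCc ψ) = some (trC ψ) ∧ vAfter l v (encCc ψ) = 0 := by
  intro l
  induction l with
  | nil => intro v ε ψ h; cases h
  | cons χ t ih =>
      intro v ε ψ h
      rw [vAfter, eAfter]
      by_cases hm : ψ ∈ t
      · exact ih (Function.update v (encCc χ) 0) (Function.update ε (encCc χ) (some (trC χ))) ψ hm
      · have hψχ : ψ = χ := by
          rcases List.mem_cons.mp h with h | h
          · exact h
          · exact absurd h hm
        subst hψχ
        have hne : ∀ θ ∈ t, encCc θ ≠ encCc ψ := by
          intro θ hθ he
          exact hm (encCc_inj he ▸ hθ)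
        obtain ⟨h1, h2⟩ := after_untouched t (Function.update v (encCc ψ) 0)
          (Function.update ε (encCc ψ) (some (trC ψ))) hne
        rw [h1, h2, Function.update_self, Function.update_self]
        exact ⟨rfl, rfl⟩

lemma eAfter_isSome {y : ℕ} : ∀ (l : List CcForm) (ε : ℕ → Option VForm),
    (eAfter l ε y).isSome → (ε y).isSome ∨ ∃ ψ ∈ l, y = encCc ψ := by
  intro l
  induction l with
  | nil => intro ε h; rw [eAfter] at h; exact Or.inl h
  | cons ψ t ih =>
      intro ε h
      rw [eAfter] at h
      rcases ih _ h with h | ⟨χ, h1, h2⟩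
      · by_cases hy : y = encCc ψ
        · exact Or.inr ⟨ψ, List.mem_cons_self .., hy⟩
        · rw [Function.update_of_ne hy] at h
          exact Or.inl h
      · exact Or.inr ⟨χ, List.mem_cons_of_mem _ h1, h2⟩

lemma lvval_trL {Q : Type} (S : Kripke Q) {σ : List Q} {w : ℕ → ℕ} :
    ∀ (l : List (ℕ × CcForm)), (∀ t ∈ l, w (encCc t.2) = countH S t.2 [] σ) →
    lvval (trL l) w = clsum S l σ := by
  intro l
  induction l with
  | nil => intro _; rw [trL, clsum]; rfl
  | cons hd t ih =>
      obtain ⟨a, χ⟩ := hd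
      intro h
      rw [trL, clsum]
      have : lvval ((a, encCc χ) :: trL t) w = a * w (encCc χ) + lvval (trL t) w := by
        simp [lvval]
      rw [this, ih (fun t ht => h t (List.mem_cons_of_mem _ ht)), h (a, χ) (List.mem_cons_self ..)]

/-- The per-run equivalence at the heart of the `EU`/`AU` cases. -/
lemma run_body {Q : Type} (S : Kripke Q) {N : ℕ}
    (hih : ∀ Φ : CcForm, sizeOf Φ ≤ N → ∀ (π : List Q) (q : Q) (v : ℕ → ℕ)
      (ε : ℕ → Option VForm) (k : ℕ), List.Chain' S.R (π ++ [q]) →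
      (∀ ψ ∈ SFnb Φ, ε (encCc ψ) = some (trC ψ) ∧ v (encCc ψ) = countH S ψ [] π) →
      (∀ z, (ε z).isSome → z < k) → (∀ z ∈ (trC Φ).vars, z < k) →
      (ccsat S Φ π q ↔ vsat S k (trC Φ) q v ε))
    {Φ a b : CcForm} {l : List (ℕ × CcForm)} {c : Cmp} {m : ℕ}
    (ha : sizeOf a ≤ N) (hb : sizeOf b ≤ N)
    (hmem : ∀ x, x ∈ l.map Prod.snd ++ SFnbL l ++ SFnb a ++ SFnb b → x ∈ SFnb Φ)
    (hszΦ : ∀ χ ∈ SFnb Φ, sizeOf χ ≤ N)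
    (π : List Q) (q : Q) (v : ℕ → ℕ) (ε : ℕ → Option VForm) (k : ℕ)
    (hπ : List.Chain' S.R (π ++ [q]))
    (hcomp : ∀ ψ ∈ SFnb Φ, ε (encCc ψ) = some (trC ψ) ∧ v (encCc ψ) = countH S ψ [] π)
    (hkε : ∀ z, (ε z).isSome → z < k)
    (hva : ∀ z ∈ (trC a).vars, z < k) (hvb : ∀ z ∈ (trC b).vars, z < k)
    (ρ : ℕ → Q) (hρ : S.Run ρ) (h0 : ρ 0 = q) :
    ((∃ i, ccsat S b (π ++ runPrefix ρ i) (ρ i) ∧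
        c.eval (clsum S l (π ++ runPrefix ρ i)) m ∧
        ∀ j < i, ccsat S a (π ++ runPrefix ρ j) (ρ j)) ↔
      (∃ i, vsat S k (vand (.constr (trL l) c m) (trC b)) (ρ i)
          (updAlong S k v ε (runPrefix ρ i)) ε ∧
        ∀ j < i, vsat S k (trC a) (ρ j) (updAlong S k v ε (runPrefix ρ j)) ε)) := by
  have hchain : ∀ j, List.Chain' S.R ((π ++ runPrefix ρ j) ++ [ρ j]) :=
    chain_run S π ρ hρ (by rw [h0]; exact hπ)
  set G : Set ℕ := {y | ∃ χ' ∈ SFnb Φ, y = encCc χ'} with hGdef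
  have hkSF : ∀ χ' ∈ SFnb Φ, encCc χ' < k := fun χ' h =>
    hkε _ (by rw [(hcomp χ' h).1]; rfl)
  have hG : epsGood G ε := by
    rintro y ⟨χ'', hχ'', rfl⟩ χ0 hε0
    rw [(hcomp χ'' hχ'').1] at hε0
    cases hε0
    refine ⟨trC_wf _, fun w hw => ?_⟩
    obtain ⟨χ3, h3, rfl⟩ := vars_trC hw
    exact ⟨⟨χ3, SFnb_trans hχ'' h3, rfl⟩, SFnb_enc h3⟩
  have hkvχ : ∀ χ ∈ SFnb Φ, ∀ z ∈ (trC χ).vars, z < k := by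
    intro χ hχ z hz
    obtain ⟨χ3, h3, rfl⟩ := vars_trC hz
    exact hkSF _ (SFnb_trans hχ h3)
  have Inv : ∀ j, ∀ χ ∈ SFnb Φ,
      updAlong S k v ε (runPrefix ρ j) (encCc χ) = countH S χ [] (π ++ runPrefix ρ j) := by
    intro j
    induction j with
    | zero =>
        intro χ hχ
        rw [runPrefix_zero, updAlong_nil, List.append_nil]
        exact (hcomp χ hχ).2
    | succ j ihj =>
        intro χ hχ
        rw [runPrefix_succ, updAlong_snoc, ← List.append_assoc, countH_snoc,
          List.nil_append]
        set vj := updAlong S k v ε (runPrefix ρ j) with hvj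
        have hεχ := (hcomp χ hχ).1
        have hsome : (ε (encCc χ)).isSome := by rw [hεχ]; rfl
        have hklt : encCc χ < k := hkε _ hsome
        simp only [updOne]
        rw [dif_pos (⟨hklt, hsome⟩ : encCc χ < k ∧ (ε (encCc χ)).isSome)]
        have hiff1 : vsat S (encCc χ) (trC χ) (ρ j) vj ε ↔ vsat S k (trC χ) (ρ j) vj ε := by
          refine lemN S (encCc χ + k) (encCc χ) k le_rfl G (trC χ) (trC_wf χ)
            (fun y hy => ?_) vj vj ε hG (fun _ _ _ _ => rfl) (ρ j)
          obtain ⟨χ3, h3, rfl⟩ := vars_trC hy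
          exact ⟨⟨χ3, SFnb_trans hχ h3, rfl⟩, SFnb_enc h3, hkSF _ (SFnb_trans hχ h3)⟩
        have hiff2 : ccsat S χ (π ++ runPrefix ρ j) (ρ j) ↔ vsat S k (trC χ) (ρ j) vj ε :=
          hih χ (hszΦ χ hχ) (π ++ runPrefix ρ j) (ρ j) vj ε k (hchain j)
            (fun ψ' hψ' => ⟨(hcomp ψ' (SFnb_trans hχ hψ')).1, ihj ψ' (SFnb_trans hχ hψ')⟩)
            hkε (hkvχ χ hχ)
        have hgoal : vsat S (encCc χ) ((ε (encCc χ)).get hsome) (ρ j) vj ε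
            ↔ ccsat S χ (π ++ runPrefix ρ j) (ρ j) := by
          rw [show (ε (encCc χ)).get hsome = trC χ by simp [hεχ]]
          exact hiff1.trans hiff2.symm
        by_cases hcc : ccsat S χ (π ++ runPrefix ρ j) (ρ j)
        · rw [if_pos (by exact hgoal.mpr hcc), if_pos hcc, ihj χ hχ]
        · rw [if_neg (by exact fun hh => hcc (hgoal.mp hh)), if_neg hcc, ihj χ hχ]; omega
  have hsubb : ∀ x ∈ SFnb b, x ∈ SFnb Φ := fun x hx =>
    hmem x (by simp only [List.mem_append]; tauto)
  have hsuba : ∀ x ∈ SFnb a, x ∈ SFnb Φ := fun x hx =>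
    hmem x (by simp only [List.mem_append]; tauto)
  have hsubl : ∀ x ∈ l.map Prod.snd, x ∈ SFnb Φ := fun x hx =>
    hmem x (by simp only [List.mem_append]; tauto)
  have hiffb : ∀ j, ccsat S b (π ++ runPrefix ρ j) (ρ j)
      ↔ vsat S k (trC b) (ρ j) (updAlong S k v ε (runPrefix ρ j)) ε := fun j =>
    hih b hb (π ++ runPrefix ρ j) (ρ j) _ ε k (hchain j)
      (fun ψ' hψ' => ⟨(hcomp ψ' (hsubb ψ' hψ')).1, Inv j ψ' (hsubb ψ' hψ')⟩) hkε hvb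
  have hiffa : ∀ j, ccsat S a (π ++ runPrefix ρ j) (ρ j)
      ↔ vsat S k (trC a) (ρ j) (updAlong S k v ε (runPrefix ρ j)) ε := fun j =>
    hih a ha (π ++ runPrefix ρ j) (ρ j) _ ε k (hchain j)
      (fun ψ' hψ' => ⟨(hcomp ψ' (hsuba ψ' hψ')).1, Inv j ψ' (hsuba ψ' hψ')⟩) hkε hva
  have hcstr : ∀ j, vsat S k (VForm.constr (trL l) c m) (ρ j)
      (updAlong S k v ε (runPrefix ρ j)) ε ↔ c.eval (clsum S l (π ++ runPrefix ρ j)) m := by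
    intro j
    simp only [vsat]
    rw [lvval_trL S l (fun t ht => Inv j t.2 (hsubl t.2 (List.mem_map_of_mem ht)))]
  refine exists_congr fun i => ?_
  rw [vsat_vand]
  constructor
  · rintro ⟨h1, h2, h3⟩
    exact ⟨⟨(hcstr i).mpr h2, (hiffb i).mp h1⟩, fun j hj => (hiffa j).mp (h3 j hj)⟩
  · rintro ⟨⟨h2, h1⟩, h3⟩
    exact ⟨(hiffb i).mpr h1, (hcstr i).mp h2, fun j hj => (hiffa j).mpr (h3 j hj)⟩

theorem main_aux {Q : Type} (S : Kripke Q) : ∀ N : ℕ, ∀ Φ : CcForm, sizeOf Φ ≤ N →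
    ∀ (π : List Q) (q : Q) (v : ℕ → ℕ) (ε : ℕ → Option VForm) (k : ℕ),
    List.Chain' S.R (π ++ [q]) →
    (∀ ψ ∈ SFnb Φ, ε (encCc ψ) = some (trC ψ) ∧ v (encCc ψ) = countH S ψ [] π) →
    (∀ z, (ε z).isSome → z < k) →
    (∀ z ∈ (trC Φ).vars, z < k) →
    (ccsat S Φ π q ↔ vsat S k (trC Φ) q v ε) := by
  intro N
  induction N with
  | zero => intro Φ h; exfalso; have := sizeOf_pos_cc Φ; omega
  | succ N ih =>
      intro Φ hs π q v ε k hπ hcomp hkε hkv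
      cases Φ with
      | atom p =>
          rw [trC_atom]
          simp only [ccsat, vsat]
      | and a b =>
          have hsz : sizeOf (CcForm.and a b) = 1 + sizeOf a + sizeOf b := by simp
          rw [trC_and] at hkv ⊢
          rw [vsat_vand]
          simp only [ccsat]
          refine and_congr
            (ih a (by omega) π q v ε k hπ (fun ψ hψ => hcomp ψ ?_) hkε (fun z hz => hkv z ?_))
            (ih b (by omega) π q v ε k hπ (fun ψ hψ => hcomp ψ ?_) hkε (fun z hz => hkv z ?_))
          · simp only [SFnb, List.mem_append]; tauto
          · rw [vand_vars]; exact Finset.mem_union.mpr (Or.inl hz)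
          · simp only [SFnb, List.mem_append]; tauto
          · rw [vand_vars]; exact Finset.mem_union.mpr (Or.inr hz)
      | not a =>
          have hsz : sizeOf (CcForm.not a) = 1 + sizeOf a := by simp
          rw [trC_not] at hkv ⊢
          simp only [ccsat, vsat]
          refine not_congr
            (ih a (by omega) π q v ε k hπ (fun ψ hψ => hcomp ψ ?_) hkε (fun z hz => hkv z ?_))
          · simpa only [SFnb] using hψ
          · simpa only [VForm.vars] using hz
      | now a =>
          have hsz : sizeOf (CcForm.now a) = 1 + sizeOf a := by simp
          rw [trC_now] at hkv ⊢
          simp only [ccsat]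
          rw [vsat_bindL]
          refine ih a (by omega) [] q (vAfter (SFnb a) v) (eAfter (SFnb a) ε) k ?_ ?_ ?_ ?_
          · exact List.isChain_singleton q
          · intro ψ hψ
            refine ⟨(after_mem (SFnb a) v ε ψ hψ).1, ?_⟩
            rw [(after_mem (SFnb a) v ε ψ hψ).2, countH_nil]
          · intro z hz
            rcases eAfter_isSome (SFnb a) ε hz with h | ⟨ψ, h1, h2⟩
            · exact hkε z h
            · subst h2
              exact hkv _ ((bindL_vars_sup (SFnb a) (trC a)).1 ψ h1)
          · intro z hz
            exact hkv z ((bindL_vars_sup (SFnb a) (trC a)).2 hz)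
      | eu a l c m b =>
          have hsz : sizeOf (CcForm.eu a l c m b)
              = 1 + sizeOf a + sizeOf l + sizeOf c + sizeOf m + sizeOf b := by simp
          rw [trC_eu] at hkv ⊢
          simp only [ccsat, vsat]
          refine exists_congr fun ρ => and_congr_right fun hρ => and_congr_right fun h0 => ?_
          refine run_body S ih (by omega) (by omega) (fun x hx => ?_)
            (fun χ hχ => by have := SFnb_size hχ; omega) π q v ε k hπ hcomp hkε
            (fun z hz => hkv z ?_) (fun z hz => hkv z ?_) ρ hρ h0
          · simpa only [SFnb] using hx
          · simp only [VForm.vars, vand_vars, Finset.mem_union]; tauto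
          · simp only [VForm.vars, vand_vars, Finset.mem_union]; tauto
      | au a l c m b =>
          have hsz : sizeOf (CcForm.au a l c m b)
              = 1 + sizeOf a + sizeOf l + sizeOf c + sizeOf m + sizeOf b := by simp
          rw [trC_au] at hkv ⊢
          simp only [ccsat, vsat]
          refine forall_congr' fun ρ => imp_congr_right fun hρ => imp_congr_right fun h0 => ?_
          refine run_body S ih (by omega) (by omega) (fun x hx => ?_)
            (fun χ hχ => by have := SFnb_size hχ; omega) π q v ε k hπ hcomp hkε
            (fun z hz => hkv z ?_) (fun z hz => hkv z ?_) ρ hρ h0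
          · simpa only [SFnb] using hx
          · simp only [VForm.vars, vand_vars, Finset.mem_union]; tauto
          · simp only [VForm.vars, vand_vars, Finset.mem_union]; tauto


/-- if `(v,ε)` is compatible with `(SF#(Φ), π)` — i.e. for
every `ψ ∈ SF#(Φ)` the variable `z_ψ` is defined, bound to `ψ̄` and has
value `#ψ(π)` — then `(π,q) ⊨_S Φ` iff `(q,v,ε) ⊨_S Φ̄`.
(The bound `k` dominates all variables in play, as in stmt 13.) -/
theorem cctlc_iff_cctlv
    {Q : Type} [Fintype Q] (S : Kripke Q)
    (Φ : CcForm) (q : Q) (π : List Q)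
    (hπ : List.Chain' S.R (π ++ [q]))
    (v : ℕ → ℕ) (ε : ℕ → Option VForm)
    (hcomp : ∀ ψ ∈ SFnb Φ,
      ε (encCc ψ) = some (trC ψ) ∧ v (encCc ψ) = countH S ψ [] π)
    (k : ℕ) (hkε : ∀ z, (ε z).isSome → z < k)
    (hkv : ∀ z ∈ (trC Φ).vars, z < k) :
    ccsat S Φ π q ↔ vsat S k (trC Φ) q v ε := by
  exact main_aux S (sizeOf Φ) Φ le_rfl π q v ε k hπ hcomp hkε hkv
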